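/- arXiv:1906.04537 — 4 statements merged into one kernel-verified Lean document; each statement's English description precedes it below -/
import Mathlib

section
/- Let q = 2^h with h ≥ 1, let i satisfy gcd(i, h) = 1, and let t1, t2, t3 be pairwise distinct elements of F_q. Then the three points (1, t1, t1^(2^i)), (1, t2, t2^(2^i)), (1, t3, t3^(2^i)) of the projective plane PG(2, q) are not collinear. -/
/-!
With `f x = x ^ 2 ^ i`, a ring endomorphism in characteristic 2, the determinant of the three
points is `(t2 - t1) f(t3 - t1) - (t3 - t1) f(t2 - t1)`. If it vanished, the ratio
`(t2 - t1) / (t3 - t1)` would be fixed by `x ↦ x ^ 2 ^ i`. Every element of `F_q` is fixed by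
`x ↦ x ^ 2 ^ h`, so the ratio is fixed by `x ↦ x ^ 2 ^ gcd(i, h) = x ^ 2`, i.e. it is `0` or `1`,
contradicting distinctness.
-/

theorem pow_pow_gcd_eq_self {M : Type*} [Monoid M] {x : M} {n a b : ℕ}
    (ha : x ^ n ^ a = x) (hb : x ^ n ^ b = x) : x ^ n ^ a.gcd b = x := by
  have hper (k : ℕ) : Function.IsPeriodicPt (· ^ n) k x ↔ x ^ n ^ k = x := by
    rw [Function.IsPeriodicPt, Function.IsFixedPt, pow_iterate]
  exact (hper _).1 (((hper a).2 ha).gcd ((hper b).2 hb))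

theorem FiniteField.eq_zero_or_one_of_pow_two_pow_eq_self {F : Type*} [Field F] [Fintype F]
    {h i : ℕ} (hF : Fintype.card F = 2 ^ h) (hgcd : i.gcd h = 1) {x : F}
    (hx : x ^ 2 ^ i = x) : x = 0 ∨ x = 1 := by
  have hxh : x ^ 2 ^ h = x := hF ▸ FiniteField.pow_card x
  have hx2 : x ^ 2 = x := by simpa [hgcd] using pow_pow_gcd_eq_self hx hxh
  exact IsIdempotentElem.iff_eq_zero_or_one.1 (by rwa [IsIdempotentElem, ← sq])

theorem det_one_self_map_eq {R : Type*} [CommRing R] (f : R →+* R) (a b c : R) :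
    !![1, a, f a; 1, b, f b; 1, c, f c].det = (b - a) * f (c - a) - (c - a) * f (b - a) := by
  simp only [Matrix.det_fin_three, Fin.isValue, Matrix.of_apply, Matrix.cons_val',
    Matrix.cons_val_zero, Matrix.cons_val_fin_one, Matrix.cons_val_one, one_mul, Matrix.cons_val,
    mul_one, map_sub]
  ring

theorem det_one_self_map_ne_zero {K : Type*} [Field K] (f : K →+* K)
    (hf : ∀ x, f x = x → x = 0 ∨ x = 1) {a b c : K} (hab : a ≠ b) (hac : a ≠ c) (hbc : b ≠ c) :
    !![1, a, f a; 1, b, f b; 1, c, f c].det ≠ 0 := by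
  have hba : b - a ≠ 0 := sub_ne_zero.2 hab.symm
  have hca : c - a ≠ 0 := sub_ne_zero.2 hac.symm
  rw [det_one_self_map_eq, sub_ne_zero]
  intro hcol
  have hfix : f ((b - a) / (c - a)) = (b - a) / (c - a) := by
    rw [map_div₀, div_eq_div_iff ((map_ne_zero f).2 hca) hca, mul_comm, hcol, mul_comm]
  rcases hf _ hfix with h0 | h1
  · exact hba (div_eq_zero_iff.1 h0 |>.resolve_right hca)
  · exact hbc (sub_left_inj.1 ((div_eq_one_iff_eq hca).1 h1))

theorem three_points_not_collinear_general (h i : ℕ) (hgcd : Nat.gcd i h = 1)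
    (F : Type) [Field F] [Fintype F] (hF : Fintype.card F = 2 ^ h)
    (t1 t2 t3 : F) (h12 : t1 ≠ t2) (h13 : t1 ≠ t3) (h23 : t2 ≠ t3) :
    LinearIndependent F
      ![(![1, t1, t1 ^ 2 ^ i] : Fin 3 → F),
        (![1, t2, t2 ^ 2 ^ i] : Fin 3 → F),
        (![1, t3, t3 ^ 2 ^ i] : Fin 3 → F)] := by
  have : CharP F 2 := charP_of_card_eq_prime_pow hF
  have hfix (x : F) (hx : iterateFrobenius F 2 i x = x) : x = 0 ∨ x = 1 :=
    FiniteField.eq_zero_or_one_of_pow_two_pow_eq_self hF hgcd hx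
  have hdet := det_one_self_map_ne_zero _ hfix h12 h13 h23
  exact Matrix.linearIndependent_rows_iff_isUnit.2
    ((Matrix.isUnit_iff_isUnit_det _).2 hdet.isUnit)

/-- For `q = 2^h`, `gcd(i,h) = 1` and pairwise distinct `t1, t2, t3 ∈ F_q`, the three
points `(1, t_j, t_j^(2^i))` of `PG(2,q)` are not collinear, i.e. the three coordinate
vectors are linearly independent. -/
theorem three_points_not_collinear (h i : ℕ) (hh : 1 ≤ h) (hgcd : Nat.gcd i h = 1)
    (F : Type) [Field F] [Fintype F] (hF : Fintype.card F = 2 ^ h)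
    (t1 t2 t3 : F) (h12 : t1 ≠ t2) (h13 : t1 ≠ t3) (h23 : t2 ≠ t3) :
    LinearIndependent F
      ![(![1, t1, t1 ^ 2 ^ i] : Fin 3 → F),
        (![1, t2, t2 ^ 2 ^ i] : Fin 3 → F),
        (![1, t3, t3 ^ 2 ^ i] : Fin 3 → F)] :=
  three_points_not_collinear_general h i hgcd F hF t1 t2 t3 h12 h13 h23
end

section
/- Let q = 2^h with h ≥ 1 and let i satisfy gcd(i, h) = 1. Then the set H = {(1, t, t^(2^i)) : t ∈ F_q} ∪ {(0,1,0), (0,0,1)} of q+2 points of PG(2,q) is a hyperoval, i.e., no three of its points are collinear. -/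
open scoped LinearAlgebra.Projectivization

/-- The point set of the translation hyperoval
`{(1, t, t^(2^i)) : t ∈ F} ∪ {(0,1,0), (0,0,1)}` in `PG(2, q)`. -/
def translationHyperoval (F : Type) [Field F] (i : ℕ) :
    Set (ℙ F (Fin 3 → F)) :=
  {P | (∃ t : F, P = Projectivization.mk F ![1, t, t ^ 2 ^ i]
          (by intro h0; have := congrFun h0 0; simp at this)) ∨
       P = Projectivization.mk F ![0, 1, 0]
          (by intro h0; have := congrFun h0 1; simp at this) ∨
       P = Projectivization.mk F ![0, 0, 1]
          (by intro h0; have := congrFun h0 2; simp at this)}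

/-!
Three distinct points of `H` span a matrix whose determinant, up to sign, is `1`, `a - b`,
`a^σ - b^σ` or, for three affine points, `(b - a)(c - a)^σ - (c - a)(b - a)^σ`, where
`σ : t ↦ t^(2^i)` is an injective additive map in characteristic `2`. The last one vanishes only
if `u = (b - a)/(c - a)` is fixed by `σ`. Since also `u^(2^h) = u` and `gcd(i, h) = 1`, the
identity `gcd(2^i - 1, 2^h - 1) = 2^gcd(i,h) - 1` forces `u^2 = u`, so `u = 1` and `b = c`.
-/

open Projectivization Matrix

theorem pow_eq_self_of_pow_pow_eq_self_of_coprime {G₀ : Type*} [GroupWithZero G₀] {u : G₀}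
    {q i h : ℕ} (hq : 0 < q) (hi : u ^ q ^ i = u) (hh : u ^ q ^ h = u) (hcop : i.Coprime h) :
    u ^ q = u := by
  rcases eq_or_ne u 0 with rfl | hu0
  · exact zero_pow hq.ne'
  have pow_sub_one {n : ℕ} (hn : u ^ q ^ n = u) : u ^ (q ^ n - 1) = 1 := by
    rw [pow_sub₀ u hu0 (Nat.one_le_pow n q hq), hn, pow_one, mul_inv_cancel₀ hu0]
  have hq1 : u ^ (q - 1) = 1 := by
    simpa [Nat.pow_sub_one_gcd_pow_sub_one, hcop] using
      pow_gcd_eq_one.mpr ⟨pow_sub_one hi, pow_sub_one hh⟩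
  rw [← Nat.sub_add_cancel hq, pow_succ, hq1, one_mul]

namespace FiniteField

variable {F : Type*} [Field F] [Fintype F] {h i : ℕ}

theorem eq_one_of_pow_two_pow_eq_self (hF : Fintype.card F = 2 ^ h) (hcop : i.Coprime h)
    {u : F} (hu0 : u ≠ 0) (hu : u ^ 2 ^ i = u) : u = 1 := by
  have hsq : u ^ 2 = u :=
    pow_eq_self_of_pow_pow_eq_self_of_coprime two_pos hu (hF ▸ pow_card u) hcop
  exact mul_left_cancel₀ hu0 (by rw [← sq, hsq, mul_one])

theorem eq_of_mul_pow_two_pow_comm (hF : Fintype.card F = 2 ^ h) (hcop : i.Coprime h)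
    {x y : F} (hx : x ≠ 0) (hy : y ≠ 0) (hxy : x * y ^ 2 ^ i = y * x ^ 2 ^ i) : x = y := by
  have hfix : (x / y) ^ 2 ^ i = x / y := by
    rw [div_pow, div_eq_div_iff (pow_ne_zero _ hy) hy]
    linear_combination -hxy
  exact (div_eq_one_iff_eq hy).mp (eq_one_of_pow_two_pow_eq_self hF hcop (div_ne_zero hx hy) hfix)

end FiniteField

theorem Projectivization.independent_of_det_ne_zero {K : Type*} [Field K] {n : ℕ}
    (A : Matrix (Fin n) (Fin n) K) (hA : ∀ k, A k ≠ 0) (hdet : A.det ≠ 0) :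
    Independent fun k => mk K (A k) (hA k) :=
  Independent.mk _ hA (linearIndependent_rows_of_det_ne_zero hdet)

section TranslationHyperoval

variable {F : Type} [Field F]

/-- Indexing the points by `Option (Option F)` makes `q + 2` the cardinality of the index type. -/
def hyperovalVec (i : ℕ) : Option (Option F) → Fin 3 → F
  | some (some t) => ![1, t, t ^ 2 ^ i]
  | some none => ![0, 1, 0]
  | none => ![0, 0, 1]

theorem hyperovalVec_ne_zero (i : ℕ) (x : Option (Option F)) : hyperovalVec i x ≠ 0 := by
  rcases x with _ | _ | t <;> simp [hyperovalVec, funext_iff, Fin.forall_fin_succ]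

def hyperovalPoint (i : ℕ) (x : Option (Option F)) : ℙ F (Fin 3 → F) :=
  mk F (hyperovalVec i x) (hyperovalVec_ne_zero i x)

theorem hyperovalPoint_injective (i : ℕ) : Function.Injective (hyperovalPoint (F := F) i) := by
  intro x y hxy
  obtain ⟨c, hc⟩ := (mk_eq_mk_iff' ..).mp hxy
  rcases x with _ | _ | a <;> rcases y with _ | _ | b <;>
    simp [hyperovalVec, funext_iff, Fin.forall_fin_succ] at hc ⊢ <;> grind

theorem range_hyperovalPoint (i : ℕ) :
    Set.range (hyperovalPoint (F := F) i) = translationHyperoval F i := by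
  ext P
  simp only [translationHyperoval, hyperovalPoint, hyperovalVec, Set.mem_range, Option.exists,
    Set.mem_ofPred_eq, eq_comm]
  tauto

variable [Fintype F] {h i : ℕ}

theorem det_hyperovalVec_some_ne_zero (hF : Fintype.card F = 2 ^ h) (hcop : i.Coprime h)
    {a b c : F} (hab : a ≠ b) (hac : a ≠ c) (hbc : b ≠ c) :
    (of ![hyperovalVec i (some (some a)), hyperovalVec i (some (some b)),
      hyperovalVec i (some (some c))]).det ≠ 0 := by
  have := charP_of_card_eq_prime_pow hF
  have hdet : (of ![hyperovalVec i (some (some a)), hyperovalVec i (some (some b)),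
      hyperovalVec i (some (some c))]).det =
      (b - a) * (c - a) ^ 2 ^ i - (c - a) * (b - a) ^ 2 ^ i := by
    simp only [det_fin_three, hyperovalVec, of_apply, cons_val_zero, cons_val_one, cons_val,
      sub_pow_char_pow]
    ring
  rw [hdet, sub_ne_zero]
  exact fun hd => hbc (sub_left_inj.mp (FiniteField.eq_of_mul_pow_two_pow_comm hF hcop
    (sub_ne_zero.2 hab.symm) (sub_ne_zero.2 hac.symm) hd))

theorem det_hyperovalVec_ne_zero (hF : Fintype.card F = 2 ^ h) (hcop : i.Coprime h)
    {x y z : Option (Option F)} (hxy : x ≠ y) (hxz : x ≠ z) (hyz : y ≠ z) :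
    (of ![hyperovalVec i x, hyperovalVec i y, hyperovalVec i z]).det ≠ 0 := by
  have := charP_of_card_eq_prime_pow hF
  have hinj : Function.Injective fun t : F => t ^ 2 ^ i := iterateFrobenius_inj F 2 i
  rcases x with _ | _ | a <;> rcases y with _ | _ | b <;> rcases z with _ | _ | c
  case some.some.some.some.some.some =>
    exact det_hyperovalVec_some_ne_zero hF hcop (by simpa using hxy) (by simpa using hxz)
      (by simpa using hyz)
  all_goals
    simp [det_fin_three, hyperovalVec, sub_eq_zero, neg_add_eq_zero, hinj.eq_iff]
      at hxy hxz hyz ⊢ <;> tauto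

end TranslationHyperoval

theorem translationHyperoval_is_hyperoval_general (h i : ℕ)
    (hgcd : Nat.gcd i h = 1)
    (F : Type) [Field F] [Fintype F] (hF : Fintype.card F = 2 ^ h) :
    (translationHyperoval F i).ncard = 2 ^ h + 2 ∧
    ∀ P1 P2 P3 : ℙ F (Fin 3 → F),
      P1 ∈ translationHyperoval F i → P2 ∈ translationHyperoval F i →
      P3 ∈ translationHyperoval F i →
      P1 ≠ P2 → P1 ≠ P3 → P2 ≠ P3 →
      Projectivization.Independent ![P1, P2, P3] := by
  rw [← range_hyperovalPoint]
  refine ⟨?_, ?_⟩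
  · rw [Set.ncard_range_of_injective (hyperovalPoint_injective i), Nat.card_eq_fintype_card,
      Fintype.card_option, Fintype.card_option, hF]
  · rintro _ _ _ ⟨x, rfl⟩ ⟨y, rfl⟩ ⟨z, rfl⟩ hxy hxz hyz
    have hdet := det_hyperovalVec_ne_zero hF hgcd (ne_of_apply_ne _ hxy) (ne_of_apply_ne _ hxz)
      (ne_of_apply_ne _ hyz)
    convert independent_of_det_ne_zero _
      (fun k => by fin_cases k <;> exact hyperovalVec_ne_zero i _) hdet using 1
    ext k
    fin_cases k <;> rfl

/-- For `q = 2^h` and `gcd(i,h) = 1`, the set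
`H = {(1, t, t^(2^i)) : t ∈ F_q} ∪ {(0,1,0), (0,0,1)}` of `q + 2` points of `PG(2,q)`
is a hyperoval: no three of its points are collinear. -/
theorem translationHyperoval_is_hyperoval (h i : ℕ) (hh : 1 ≤ h)
    (hgcd : Nat.gcd i h = 1)
    (F : Type) [Field F] [Fintype F] (hF : Fintype.card F = 2 ^ h) :
    (translationHyperoval F i).ncard = 2 ^ h + 2 ∧
    ∀ P1 P2 P3 : ℙ F (Fin 3 → F),
      P1 ∈ translationHyperoval F i → P2 ∈ translationHyperoval F i →
      P3 ∈ translationHyperoval F i →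
      P1 ≠ P2 → P1 ≠ P3 → P2 ≠ P3 →
      Projectivization.Independent ![P1, P2, P3] :=
  translationHyperoval_is_hyperoval_general h i hgcd F hF
end

section
/- Let q = 2^h, k ≥ 1, gcd(i, hk) = 1, and let D = {⟨(u, u^(2^i))⟩_{F_q} : u ∈ F_{q^k}^*} ⊆ PG(2k-1, q). Then every projective line of PG(2k-1, q) meets D in exactly 0, 1, 3, or q - 1 points. -/
/-!
Write `σ u = u ^ 2 ^ i`. The points of `D` on `L` are the `⟨(u, σ u)⟩` with `u ≠ 0` in the
additive group `S = {u | (u, σ u) ∈ L}`, and distinct such `u` give distinct points, because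
`gcd(i, h) = 1` makes `0` and `1` the only elements of `F_q` fixed by `σ`.

If `S` contains `u ≠ 0` and `c u` with `σ c ≠ c`, then `(0, σ u) ∈ L`, hence `S = F_q u`:
this gives `q - 1` points. If `S` contains `F_q`-independent `u, v`, then
`L = ⟨(u, σ u), (v, σ v)⟩`; for `w = a u + b v ∈ S`, comparing `σ w = σ a σ u + σ b σ v`
with `a σ u + b σ v` forces `σ a = a` and `σ b = b`, since otherwise `σ v ∈ F_q σ u`,
so `v ∈ F_q u` (`σ` is bijective on `F_q`). Thus `S = {0, u, v, u + v}`: `3` points.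
Otherwise `S ⊆ {0, u}`.
-/

open Submodule Function

theorem pow_eq_self_of_pow_pow_eq_self {M : Type*} [GroupWithZero M] [Fintype M] {p h i : ℕ}
    (hcard : Fintype.card M = p ^ h) (hi : i.Coprime h) {x : M} (hx : x ^ p ^ i = x) :
    x ^ p = x := by
  have hper_i : IsPeriodicPt (· ^ p) i x := by
    rw [IsPeriodicPt, IsFixedPt, pow_iterate]; exact hx
  have hper_h : IsPeriodicPt (· ^ p) h x := by
    rw [IsPeriodicPt, IsFixedPt, pow_iterate, ← hcard]; exact FiniteField.pow_card x
  simpa [IsPeriodicPt, IsFixedPt, hi.gcd_eq_one] using hper_i.gcd hper_h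

theorem eq_zero_or_one_of_pow_two_pow_eq_self {F : Type*} [Field F] [Fintype F] {h i : ℕ}
    (hcard : Fintype.card F = 2 ^ h) (hi : i.Coprime h) {a : F} (ha : a ^ 2 ^ i = a) :
    a = 0 ∨ a = 1 :=
  IsIdempotentElem.iff_eq_zero_or_one.mp <| by
    rw [IsIdempotentElem, ← sq]; exact pow_eq_self_of_pow_pow_eq_self hcard hi ha

theorem Submodule.span_pair_eq_of_finrank_eq_two {R M : Type*} [DivisionRing R]
    [AddCommGroup M] [Module R M] {L : Submodule R M} (hL : Module.finrank R L = 2)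
    {x y : M} (hx : x ∈ L) (hy : y ∈ L) (hxy : LinearIndependent R ![x, y]) :
    span R {x, y} = L := by
  have : FiniteDimensional R L := Module.finite_of_finrank_eq_succ hL
  refine eq_of_le_of_finrank_eq
    (span_le.mpr (Set.insert_subset hx (Set.singleton_subset_iff.mpr hy))) ?_
  rw [hL, ← Matrix.range_cons_cons_empty, finrank_span_eq_card hxy, Fintype.card_fin]

section PowGraph

variable {F K : Type*} [Field F] [Field K] [Algebra F K]

def powGraphPreimage (L : Submodule F (K × K)) (n : ℕ) : Set K := {u | (u, u ^ n) ∈ L}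

variable {L : Submodule F (K × K)} {n : ℕ}

theorem injOn_span_powGraph (hfix : ∀ a : F, a ^ n = a → a = 0 ∨ a = 1) :
    Set.InjOn (fun u : K => span F {(u, u ^ n)}) {0}ᶜ := by
  intro u hu v hv huv
  have hmem : (v, v ^ n) ∈ span F {(u, u ^ n)} := by
    rw [show span F {(u, u ^ n)} = span F {(v, v ^ n)} from huv]
    exact mem_span_singleton_self _
  obtain ⟨a, ha⟩ := mem_span_singleton.mp hmem
  simp only [Prod.smul_mk, Prod.mk.injEq] at ha
  obtain ⟨rfl, ha⟩ := ha
  have hfixed : a ^ n = a := by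
    rw [smul_pow] at ha
    exact smul_left_injective F (pow_ne_zero n hu) ha.symm
  rcases hfix a hfixed with rfl | rfl
  · simp at hv
  · simp

theorem ncard_powGraph_points_eq (hfix : ∀ a : F, a ^ n = a → a = 0 ∨ a = 1) :
    {P : Submodule F (K × K) | (∃ u : K, u ≠ 0 ∧ P = span F {(u, u ^ n)}) ∧ P ≤ L}.ncard
      = (powGraphPreimage L n \ {0}).ncard := by
  rw [← ((injOn_span_powGraph hfix).mono (Set.sdiff_subset_compl _ _)).ncard_image]
  congr 1
  ext P
  simp only [Set.mem_ofPred_eq, Set.mem_image, Set.mem_sdiff, Set.mem_singleton_iff,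
    powGraphPreimage, ← span_singleton_le_iff_mem]
  constructor
  · rintro ⟨⟨u, hu, rfl⟩, hPL⟩
    exact ⟨u, ⟨hPL, hu⟩, rfl⟩
  · rintro ⟨u, ⟨hPL, hu⟩, rfl⟩
    exact ⟨⟨u, hu, rfl⟩, hPL⟩

theorem zero_mem_powGraphPreimage (hn : n ≠ 0) : (0 : K) ∈ powGraphPreimage L n := by
  rw [powGraphPreimage, Set.mem_ofPred_eq, zero_pow hn, Prod.mk_zero_zero]
  exact L.zero_mem

theorem add_mem_powGraphPreimage [CharP K 2] {i : ℕ} {u v : K}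
    (hu : u ∈ powGraphPreimage L (2 ^ i)) (hv : v ∈ powGraphPreimage L (2 ^ i)) :
    u + v ∈ powGraphPreimage L (2 ^ i) := by
  simpa [powGraphPreimage, add_pow_char_pow] using L.add_mem hu hv

theorem smul_mem_powGraphPreimage {u : K} {c : F} (hu : u ∈ powGraphPreimage L n)
    (hcu : c • u ∈ powGraphPreimage L n) (hc : c ^ n ≠ c) (a : F) :
    a • u ∈ powGraphPreimage L n := by
  have hvert : ((0 : K), u ^ n) ∈ L := by
    convert L.smul_mem (c ^ n - c)⁻¹ (L.sub_mem hcu (L.smul_mem c hu)) using 1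
    simp [smul_pow, ← sub_smul, smul_smul, inv_mul_cancel₀ (sub_ne_zero.mpr hc)]
  rw [powGraphPreimage, Set.mem_ofPred_eq, smul_pow]
  convert L.add_mem (L.smul_mem a hu) (L.smul_mem (a ^ n - a) hvert) using 1
  simp [sub_smul]

variable [CharP F 2] [CharP K 2] [Finite F] {i : ℕ}

theorem pow_two_pow_eq_self_of_add_pow_two_pow {u v : K} (hu : u ≠ 0)
    (hvu : ∀ c : F, c • u ≠ v) {a b : F}
    (h : (a • u + b • v) ^ 2 ^ i = a • u ^ 2 ^ i + b • v ^ 2 ^ i) :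
    a ^ 2 ^ i = a ∧ b ^ 2 ^ i = b := by
  rw [add_pow_char_pow, smul_pow, smul_pow] at h
  have hb : b ^ 2 ^ i = b := by
    by_contra hb
    obtain ⟨d, hd⟩ :=
      (bijective_iterateFrobenius F 2 i).2 ((b - b ^ 2 ^ i)⁻¹ * (a ^ 2 ^ i - a))
    refine hvu d ((iterateFrobenius K 2 i).injective ?_)
    rw [iterateFrobenius_def, iterateFrobenius_def, smul_pow, ← iterateFrobenius_def (p := 2), hd,
      mul_smul, inv_smul_eq_iff₀ (sub_ne_zero.mpr (Ne.symm hb))]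
    linear_combination (norm := module) h
  refine ⟨?_, hb⟩
  rw [hb] at h
  have h' : (a ^ 2 ^ i - a) • u ^ 2 ^ i = 0 := by linear_combination (norm := module) h
  exact sub_eq_zero.mp ((smul_eq_zero.mp h').resolve_right (pow_ne_zero _ hu))

theorem powGraphPreimage_subset_of_forall_smul_ne (hL : Module.finrank F L = 2)
    (hfix : ∀ a : F, a ^ 2 ^ i = a → a = 0 ∨ a = 1) {u v : K}
    (hu : u ∈ powGraphPreimage L (2 ^ i)) (hv : v ∈ powGraphPreimage L (2 ^ i)) (hu0 : u ≠ 0)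
    (hvu : ∀ c : F, c • u ≠ v) : powGraphPreimage L (2 ^ i) ⊆ {0, u, v, u + v} := by
  have hli : LinearIndependent F ![(u, u ^ 2 ^ i), (v, v ^ 2 ^ i)] :=
    (LinearIndependent.pair_iff' (by simp [hu0])).mpr fun c hc => hvu c (congrArg Prod.fst hc)
  have hspan := span_pair_eq_of_finrank_eq_two hL hu hv hli
  intro w hw
  obtain ⟨a, b, hab⟩ := mem_span_pair.mp (hspan.symm ▸ hw : (w, w ^ 2 ^ i) ∈ span F _)
  simp only [Prod.smul_mk, Prod.mk_add_mk, Prod.mk.injEq] at hab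
  obtain ⟨rfl, hab⟩ := hab
  obtain ⟨ha, hb⟩ := pow_two_pow_eq_self_of_add_pow_two_pow hu0 hvu hab.symm
  rcases hfix a ha with rfl | rfl <;> rcases hfix b hb with rfl | rfl <;> simp

theorem powGraphPreimage_cases (hL : Module.finrank F L = 2)
    (hfix : ∀ a : F, a ^ 2 ^ i = a → a = 0 ∨ a = 1) :
    powGraphPreimage L (2 ^ i) = {0} ∨
    (∃ u : K, u ≠ 0 ∧ powGraphPreimage L (2 ^ i) = {0, u}) ∨
    (∃ u v : K, u ≠ 0 ∧ (∀ c : F, c • u ≠ v) ∧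
      powGraphPreimage L (2 ^ i) = {0, u, v, u + v}) ∨
    ∃ u : K, u ≠ 0 ∧ powGraphPreimage L (2 ^ i) = Set.range fun c : F => c • u := by
  set S := powGraphPreimage L (2 ^ i)
  have h0 : (0 : K) ∈ S := zero_mem_powGraphPreimage (by positivity)
  by_cases hzero : S ⊆ {0}
  · exact Or.inl (hzero.antisymm (Set.singleton_subset_iff.mpr h0))
  obtain ⟨u, hu, hu0⟩ := Set.not_subset.mp hzero
  rw [Set.mem_singleton_iff] at hu0
  by_cases hplane : ∃ v ∈ S, ∀ c : F, c • u ≠ v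
  · obtain ⟨v, hv, hvu⟩ := hplane
    refine Or.inr (Or.inr (Or.inl ⟨u, v, hu0, hvu, ?_⟩))
    refine (powGraphPreimage_subset_of_forall_smul_ne hL hfix hu hv hu0 hvu).antisymm ?_
    exact Set.insert_subset h0 <| Set.insert_subset hu <| Set.insert_subset hv <|
      Set.singleton_subset_iff.mpr (add_mem_powGraphPreimage hu hv)
  push Not at hplane
  by_cases hmoving : ∃ c : F, c • u ∈ S ∧ c ^ 2 ^ i ≠ c
  · obtain ⟨c, hcu, hc⟩ := hmoving
    refine Or.inr (Or.inr (Or.inr ⟨u, hu0, ?_⟩))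
    refine subset_antisymm (fun v hv => hplane v hv) ?_
    rintro _ ⟨a, rfl⟩
    exact smul_mem_powGraphPreimage hu hcu hc a
  push Not at hmoving
  refine Or.inr (Or.inl ⟨u, hu0, ?_⟩)
  refine subset_antisymm ?_ (Set.insert_subset h0 (Set.singleton_subset_iff.mpr hu))
  intro v hv
  obtain ⟨c, rfl⟩ := hplane v hv
  rcases hfix c (hmoving c hv) with rfl | rfl <;> simp

theorem ncard_powGraphPreimage_sdiff_zero [Fintype F] (hL : Module.finrank F L = 2)
    (hfix : ∀ a : F, a ^ 2 ^ i = a → a = 0 ∨ a = 1) :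
    (powGraphPreimage L (2 ^ i) \ {0}).ncard = 0 ∨
    (powGraphPreimage L (2 ^ i) \ {0}).ncard = 1 ∨
    (powGraphPreimage L (2 ^ i) \ {0}).ncard = 3 ∨
    (powGraphPreimage L (2 ^ i) \ {0}).ncard = Fintype.card F - 1 := by
  rcases powGraphPreimage_cases hL hfix with
    hS | ⟨u, hu0, hS⟩ | ⟨u, v, hu0, hvu, hS⟩ | ⟨u, hu0, hS⟩ <;> rw [hS]
  · simp
  · rw [Set.insert_sdiff_self_of_notMem (by simpa using hu0.symm), Set.ncard_singleton]
    simp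
  · have hv0 : v ≠ 0 := by simpa [eq_comm] using hvu 0
    have huv : u ≠ v := by simpa using hvu 1
    have huv0 : u + v ≠ 0 := by rwa [Ne, CharTwo.add_eq_zero]
    rw [Set.insert_sdiff_self_of_notMem (by simp [hu0.symm, hv0.symm, huv0.symm])]
    right; right; left
    exact Set.ncard_eq_three.mpr ⟨u, v, u + v, huv, by simpa using hv0, by simpa using hu0, rfl⟩
  · rw [Set.ncard_sdiff_singleton_of_mem (Set.mem_range.mpr ⟨0, zero_smul F u⟩),
      Set.ncard_range_of_injective (smul_left_injective F hu0), Nat.card_eq_fintype_card]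
    simp

end PowGraph

theorem lines_meet_direction_set_general (h k i : ℕ)
    (hgcd : Nat.gcd i (h * k) = 1)
    (Fq K : Type) [Field Fq] [Field K] [Algebra Fq K]
    [Fintype Fq]
    (hq : Fintype.card Fq = 2 ^ h)
    (L : Submodule Fq (K × K)) (hL : Module.finrank Fq L = 2) :
    {P : Submodule Fq (K × K) |
        (∃ u : K, u ≠ 0 ∧ P = Submodule.span Fq {((u, u ^ 2 ^ i) : K × K)}) ∧
        P ≤ L}.ncard = 0 ∨
    {P : Submodule Fq (K × K) |
        (∃ u : K, u ≠ 0 ∧ P = Submodule.span Fq {((u, u ^ 2 ^ i) : K × K)}) ∧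
        P ≤ L}.ncard = 1 ∨
    {P : Submodule Fq (K × K) |
        (∃ u : K, u ≠ 0 ∧ P = Submodule.span Fq {((u, u ^ 2 ^ i) : K × K)}) ∧
        P ≤ L}.ncard = 3 ∨
    {P : Submodule Fq (K × K) |
        (∃ u : K, u ≠ 0 ∧ P = Submodule.span Fq {((u, u ^ 2 ^ i) : K × K)}) ∧
        P ≤ L}.ncard = 2 ^ h - 1 := by
  have : CharP Fq 2 := charP_of_card_eq_prime_pow hq
  have : CharP K 2 := charP_of_injective_algebraMap' Fq 2
  have hfix : ∀ a : Fq, a ^ 2 ^ i = a → a = 0 ∨ a = 1 := fun _ =>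
    eq_zero_or_one_of_pow_two_pow_eq_self hq (Nat.Coprime.coprime_mul_right_right hgcd)
  rw [ncard_powGraph_points_eq hfix]
  simpa only [hq] using ncard_powGraphPreimage_sdiff_zero hL hfix

/-- Let `q = 2^h`, `K = F_{q^k}`, `gcd(i, hk) = 1`, and let
`D = {⟨(u, u^(2^i))⟩_{F_q} : u ∈ K^*} ⊆ PG(2k-1, q)`. Every projective line of
`PG(2k-1, q)` (i.e. `2`-dimensional `F_q`-subspace `L` of `K × K`) meets `D` in
exactly `0`, `1`, `3` or `q - 1` points. -/
theorem lines_meet_direction_set (h k i : ℕ) (hh : 1 ≤ h) (hk : 1 ≤ k)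
    (hgcd : Nat.gcd i (h * k) = 1)
    (Fq K : Type) [Field Fq] [Field K] [Algebra Fq K]
    [Fintype Fq] [Fintype K]
    (hq : Fintype.card Fq = 2 ^ h) (hK : Fintype.card K = 2 ^ (h * k))
    (L : Submodule Fq (K × K)) (hL : Module.finrank Fq L = 2) :
    {P : Submodule Fq (K × K) |
        (∃ u : K, u ≠ 0 ∧ P = Submodule.span Fq {((u, u ^ 2 ^ i) : K × K)}) ∧
        P ≤ L}.ncard = 0 ∨
    {P : Submodule Fq (K × K) |
        (∃ u : K, u ≠ 0 ∧ P = Submodule.span Fq {((u, u ^ 2 ^ i) : K × K)}) ∧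
        P ≤ L}.ncard = 1 ∨
    {P : Submodule Fq (K × K) |
        (∃ u : K, u ≠ 0 ∧ P = Submodule.span Fq {((u, u ^ 2 ^ i) : K × K)}) ∧
        P ≤ L}.ncard = 3 ∨
    {P : Submodule Fq (K × K) |
        (∃ u : K, u ≠ 0 ∧ P = Submodule.span Fq {((u, u ^ 2 ^ i) : K × K)}) ∧
        P ≤ L}.ncard = 2 ^ h - 1 :=
  lines_meet_direction_set_general h k i hgcd Fq K hq L hL
end

section
/- Let q = 2^h with h ≥ 1 and V an F_q-vector space. Suppose P0, P1, P2, P3 ∈ V are four points, no three collinear, such that the six difference vectors P_a - P_b (a ≠ b) span only three distinct directions (i.e., determine only three 1-dimensional subspaces). Then the opposite sides are parallel in pairs: P1 - P0 is proportional to P3 - P2, P2 - P0 is proportional to P3 - P1, and P3 - P0 is proportional to P2 - P1. -/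
private lemma spans_ne_aux {F V : Type} [Field F] [AddCommGroup V] [Module F V]
    {x y : V} (li : LinearIndependent F ![x, y]) :
    Submodule.span F {x} ≠ Submodule.span F {y} := by
  intro hxy
  have hx : x ∈ Submodule.span F ({y} : Set V) := by
    rw [← hxy]; exact Submodule.mem_span_singleton_self x
  obtain ⟨c, hc⟩ := Submodule.mem_span_singleton.mp hx
  have := (LinearIndependent.pair_iff.mp li 1 (-c) (by
    rw [one_smul, neg_smul, hc]; abel)).1
  exact one_ne_zero this

private lemma pick_aux {α : Type} {a b c x y z w : α}
    (hx : x = a ∨ x = b ∨ x = c) (hy : y = a ∨ y = b ∨ y = c)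
    (hz : z = a ∨ z = b ∨ z = c) (hw : w = a ∨ w = b ∨ w = c)
    (hxy : x ≠ y) (hxz : x ≠ z) (hyz : y ≠ z) (hwy : w ≠ y) (hwz : w ≠ z) :
    w = x := by
  rcases hx with rfl|rfl|rfl <;> rcases hy with rfl|rfl|rfl <;>
    rcases hz with rfl|rfl|rfl <;> rcases hw with rfl|rfl|rfl <;> tauto

private lemma span_neg_aux {F V : Type} [Field F] [AddCommGroup V] [Module F V]
    (u : V) : Submodule.span F ({-u} : Set V) = Submodule.span F {u} := by
  apply le_antisymm <;> rw [Submodule.span_singleton_le_iff_mem]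
  · exact Submodule.neg_mem _ (Submodule.mem_span_singleton_self u)
  · have := Submodule.neg_mem (Submodule.span F ({-u} : Set V))
      (Submodule.mem_span_singleton_self (-u))
    simpa using this

private lemma main_aux {F V : Type} [Field F] [AddCommGroup V] [Module F V]
    {d1 d2 d3 : Submodule F V} (P : Fin 4 → V)
    (hcoll : ∀ a b c : Fin 4, a ≠ b → a ≠ c → b ≠ c →
      LinearIndependent F ![P b - P a, P c - P a])
    (hd : ∀ a b : Fin 4, a ≠ b →
      Submodule.span F {P a - P b} = d1 ∨ Submodule.span F {P a - P b} = d2 ∨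
      Submodule.span F {P a - P b} = d3)
    (a b c d : Fin 4) (hab : a ≠ b) (hac : a ≠ c) (had : a ≠ d)
    (hbc : b ≠ c) (hbd : b ≠ d) (hcd : c ≠ d) :
    ∃ k : F, k ≠ 0 ∧ P d - P c = k • (P b - P a) := by
  have hwx : Submodule.span F {P d - P c} = Submodule.span F {P b - P a} := by
    refine pick_aux (hd b a hab.symm) (hd c a hac.symm) (hd d a had.symm)
      (hd d c hcd.symm) (spans_ne_aux (hcoll a b c hab hac hbc))
      (spans_ne_aux (hcoll a b d hab had hbd))
      (spans_ne_aux (hcoll a c d hac had hcd)) ?_ ?_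
    · have h1 := spans_ne_aux (hcoll c a d hac.symm hcd had)
      rw [show P a - P c = -(P c - P a) by abel, span_neg_aux] at h1
      exact h1.symm
    · have h1 := spans_ne_aux (hcoll d c a hcd.symm had.symm hac.symm)
      rw [show P c - P d = -(P d - P c) by abel, span_neg_aux,
        show P a - P d = -(P d - P a) by abel, span_neg_aux] at h1
      exact h1
  have hmem : P d - P c ∈ Submodule.span F ({P b - P a} : Set V) := by
    rw [← hwx]; exact Submodule.mem_span_singleton_self _
  obtain ⟨k, hk⟩ := Submodule.mem_span_singleton.mp hmem
  have hne : P d - P c ≠ 0 := by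
    have := (hcoll c d a hcd hac.symm had.symm).ne_zero 0
    simpa using this
  refine ⟨k, ?_, hk.symm⟩
  rintro rfl
  rw [zero_smul] at hk
  exact hne hk.symm

/-- Let `q = 2^h` and `V` an `F_q`-vector space. If `P0, P1, P2, P3` are four points,
no three collinear, whose six pairwise differences determine only three distinct
directions (1-dimensional subspaces), then opposite sides are parallel in pairs. -/
theorem fano_configuration (h : ℕ) (hh : 1 ≤ h)
    (F : Type) [Field F] [Fintype F] (hF : Fintype.card F = 2 ^ h)
    (V : Type) [AddCommGroup V] [Module F V]
    (P : Fin 4 → V)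
    (hcoll : ∀ a b c : Fin 4, a ≠ b → a ≠ c → b ≠ c →
      LinearIndependent F ![P b - P a, P c - P a])
    (hdir : ∃ d1 d2 d3 : Submodule F V, ∀ a b : Fin 4, a ≠ b →
      Submodule.span F {P a - P b} = d1 ∨ Submodule.span F {P a - P b} = d2 ∨
      Submodule.span F {P a - P b} = d3) :
    (∃ c : F, c ≠ 0 ∧ P 3 - P 2 = c • (P 1 - P 0)) ∧
    (∃ c : F, c ≠ 0 ∧ P 3 - P 1 = c • (P 2 - P 0)) ∧
    (∃ c : F, c ≠ 0 ∧ P 2 - P 1 = c • (P 3 - P 0)) := by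
  obtain ⟨d1, d2, d3, hd⟩ := hdir
  exact ⟨main_aux P hcoll hd 0 1 2 3 (by decide) (by decide) (by decide) (by decide) (by decide) (by decide),
         main_aux P hcoll hd 0 2 1 3 (by decide) (by decide) (by decide) (by decide) (by decide) (by decide),
         main_aux P hcoll hd 0 3 1 2 (by decide) (by decide) (by decide) (by decide) (by decide) (by decide)⟩
end
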